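/- arXiv:2312.00402 — 2 statements merged into one kernel-verified Lean document; each statement's English description precedes it below -/
import Mathlib

section
/- For any permutation σ of [n] and any transposition (i,j), the major indices satisfy |Maj(σ) - Maj(σ∘(i,j))| ≤ 4n. -/
/-- Major index (in the sense of the paper): sum of (1-based) ascent positions. -/
def majIndex {n : ℕ} (σ : Equiv.Perm (Fin n)) : ℕ :=
  ∑ i ∈ Finset.univ.filter
      (fun i : Fin n => ∃ h : (i : ℕ) + 1 < n, σ i < σ ⟨(i : ℕ) + 1, h⟩),
    ((i : ℕ) + 1)

theorem maj_swap_diff_le {n : ℕ} (σ : Equiv.Perm (Fin n)) (i j : Fin n) (hij : i ≠ j) :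
    |(majIndex σ : ℤ) - (majIndex (σ * Equiv.swap i j) : ℤ)| ≤ 4 * n := by
  classical
  set σ' := σ * Equiv.swap i j with hσ'
  set P : Fin n → Prop := fun k => ∃ h : (k : ℕ) + 1 < n, σ k < σ ⟨(k : ℕ) + 1, h⟩ with hP
  set Q : Fin n → Prop := fun k => ∃ h : (k : ℕ) + 1 < n, σ' k < σ' ⟨(k : ℕ) + 1, h⟩ with hQ
  set A := Finset.univ.filter P with hA
  set B := Finset.univ.filter Q with hB
  set S : Finset (Fin n) := Finset.univ.filter
    (fun k => k = i ∨ k = j ∨ (k : ℕ) + 1 = (i : ℕ) ∨ (k : ℕ) + 1 = (j : ℕ)) with hS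
  have hScard : S.card ≤ 4 := by
    have hsub : S ⊆ ({i, j} : Finset (Fin n))
        ∪ Finset.univ.filter (fun k : Fin n => (k : ℕ) + 1 = (i : ℕ))
        ∪ Finset.univ.filter (fun k : Fin n => (k : ℕ) + 1 = (j : ℕ)) := by
      intro k hk
      simp only [hS, Finset.mem_filter, Finset.mem_univ, true_and] at hk
      simp only [Finset.mem_union, Finset.mem_insert, Finset.mem_singleton,
        Finset.mem_filter, Finset.mem_univ, true_and]
      tauto
    have h1 : (Finset.univ.filter (fun k : Fin n => (k : ℕ) + 1 = (i : ℕ))).card ≤ 1 := by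
      apply Finset.card_le_one.2
      intro a ha b hb
      simp only [Finset.mem_filter] at ha hb
      exact Fin.ext (by omega)
    have h2 : (Finset.univ.filter (fun k : Fin n => (k : ℕ) + 1 = (j : ℕ))).card ≤ 1 := by
      apply Finset.card_le_one.2
      intro a ha b hb
      simp only [Finset.mem_filter] at ha hb
      exact Fin.ext (by omega)
    have hij2 : ({i, j} : Finset (Fin n)).card ≤ 2 :=
      (Finset.card_insert_le _ _).trans (by simp)
    calc S.card ≤ _ := Finset.card_le_card hsub
      _ ≤ _ := Finset.card_union_le _ _
      _ ≤ ({i, j} : Finset (Fin n)).card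
            + (Finset.univ.filter (fun k : Fin n => (k : ℕ) + 1 = (i : ℕ))).card
            + (Finset.univ.filter (fun k : Fin n => (k : ℕ) + 1 = (j : ℕ))).card := by
          gcongr
          exact Finset.card_union_le _ _
      _ ≤ 4 := by omega
  have hbound : ∀ T : Finset (Fin n), (∑ k ∈ T ∩ S, ((k : ℕ) + 1)) ≤ 4 * n := by
    intro T
    calc ∑ k ∈ T ∩ S, ((k : ℕ) + 1) ≤ ∑ k ∈ S, ((k : ℕ) + 1) :=
          Finset.sum_le_sum_of_subset Finset.inter_subset_right
      _ ≤ ∑ _k ∈ S, n := Finset.sum_le_sum (fun k _ => k.isLt)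
      _ = S.card * n := by rw [Finset.sum_const, smul_eq_mul]
      _ ≤ 4 * n := Nat.mul_le_mul_right n hScard
  have hPQ : ∀ k : Fin n,
      ¬(k = i ∨ k = j ∨ (k : ℕ) + 1 = (i : ℕ) ∨ (k : ℕ) + 1 = (j : ℕ)) → (P k ↔ Q k) := by
    intro k hk
    push_neg at hk
    obtain ⟨h1, h2, h3, h4⟩ := hk
    have e1 : σ' k = σ k := by
      simp only [hσ', Equiv.Perm.mul_apply, Equiv.swap_apply_of_ne_of_ne h1 h2]
    have e2 : ∀ h : (k : ℕ) + 1 < n, σ' ⟨(k : ℕ) + 1, h⟩ = σ ⟨(k : ℕ) + 1, h⟩ := by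
      intro h
      have ne1 : (⟨(k : ℕ) + 1, h⟩ : Fin n) ≠ i := fun e => h3 (congrArg Fin.val e)
      have ne2 : (⟨(k : ℕ) + 1, h⟩ : Fin n) ≠ j := fun e => h4 (congrArg Fin.val e)
      simp only [hσ', Equiv.Perm.mul_apply, Equiv.swap_apply_of_ne_of_ne ne1 ne2]
    constructor
    · rintro ⟨h, hlt⟩
      exact ⟨h, by rw [e1, e2 h]; exact hlt⟩
    · rintro ⟨h, hlt⟩
      rw [e1, e2 h] at hlt
      exact ⟨h, hlt⟩
  have hdiffeq : A \ S = B \ S := by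
    ext k
    simp only [Finset.mem_sdiff, hA, hB, hS, Finset.mem_filter, Finset.mem_univ, true_and]
    constructor
    · rintro ⟨hp, hns⟩
      exact ⟨(hPQ k hns).1 hp, hns⟩
    · rintro ⟨hq, hns⟩
      exact ⟨(hPQ k hns).2 hq, hns⟩
  have hAsum : (∑ k ∈ A, ((k : ℕ) + 1))
      = (∑ k ∈ A ∩ S, ((k : ℕ) + 1)) + ∑ k ∈ A \ S, ((k : ℕ) + 1) :=
    (Finset.sum_inter_add_sum_sdiff A S _).symm
  have hBsum : (∑ k ∈ B, ((k : ℕ) + 1))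
      = (∑ k ∈ B ∩ S, ((k : ℕ) + 1)) + ∑ k ∈ B \ S, ((k : ℕ) + 1) :=
    (Finset.sum_inter_add_sum_sdiff B S _).symm
  have hmA : majIndex σ = ∑ k ∈ A, ((k : ℕ) + 1) := rfl
  have hmB : majIndex σ' = ∑ k ∈ B, ((k : ℕ) + 1) := rfl
  have key : (majIndex σ : ℤ) - (majIndex σ' : ℤ)
      = ((∑ k ∈ A ∩ S, ((k : ℕ) + 1) : ℕ) : ℤ) - ((∑ k ∈ B ∩ S, ((k : ℕ) + 1) : ℕ) : ℤ) := by
    rw [hmA, hmB, hAsum, hBsum, hdiffeq]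
    push_cast
    ring
  rw [key]
  have bA := hbound A
  have bB := hbound B
  have bA' : ((∑ k ∈ A ∩ S, ((k : ℕ) + 1) : ℕ) : ℤ) ≤ 4 * n := by exact_mod_cast bA
  have bB' : ((∑ k ∈ B ∩ S, ((k : ℕ) + 1) : ℕ) : ℤ) ≤ 4 * n := by exact_mod_cast bB
  have nA : (0 : ℤ) ≤ ((∑ k ∈ A ∩ S, ((k : ℕ) + 1) : ℕ) : ℤ) := Int.natCast_nonneg _
  have nB : (0 : ℤ) ≤ ((∑ k ∈ B ∩ S, ((k : ℕ) + 1) : ℕ) : ℤ) := Int.natCast_nonneg _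
  rw [abs_sub_le_iff]
  constructor <;> linarith
end

section
/- For any permutation σ of [n] and any transposition (i,j), the lengths of the longest alternating subsequences satisfy |LAS(σ) - LAS(σ∘(i,j))| ≤ C for some universal constant C (one may take C = 12). -/
/-- `l` is (the index list of) an alternating subsequence of `σ`. -/
def IsAltSubseq {n : ℕ} (σ : Equiv.Perm (Fin n)) (l : List (Fin n)) : Prop :=
  l.Chain' (· < ·) ∧
    ∀ m : ℕ, ∀ h : m + 1 < l.length,
      if m % 2 = 0 then
        σ (l.get ⟨m, Nat.lt_of_succ_lt h⟩) < σ (l.get ⟨m + 1, h⟩)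
      else
        σ (l.get ⟨m + 1, h⟩) < σ (l.get ⟨m, Nat.lt_of_succ_lt h⟩)

/-- Length of the longest alternating subsequence of `σ`. -/
noncomputable def LAS {n : ℕ} (σ : Equiv.Perm (Fin n)) : ℕ :=
  sSup {k | ∃ l : List (Fin n), IsAltSubseq σ l ∧ l.length = k}

namespace LasAux

variable {α : Type*} [LinearOrder α]

/-- directed comparison -/
def r : Bool → α → α → Prop
  | true, x, y => x < y
  | false, x, y => y < x

@[simp] lemma r_true (x y : α) : r true x y ↔ x < y := Iff.rfl
@[simp] lemma r_false (x y : α) : r false x y ↔ y < x := Iff.rfl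

lemma r_trans {b : Bool} {x y z : α} (h1 : r b x y) (h2 : r b y z) : r b x z := by
  cases b
  · exact lt_trans h2 h1
  · exact lt_trans h1 h2

lemma r_total {b : Bool} {x y : α} (hne : x ≠ y) (h : ¬ r b x y) : r (!b) x y := by
  cases b
  · simpa using lt_of_le_of_ne (not_lt.mp h) hne
  · simpa using lt_of_le_of_ne (not_lt.mp h) (Ne.symm hne)

/-- alternating list of values, starting in direction `b`. -/
inductive Alt : Bool → List α → Prop
  | nil (b) : Alt b []
  | single (b) (x : α) : Alt b [x]
  | cons {b : Bool} {x y : α} {l : List α} : r b x y → Alt (!b) (y :: l) → Alt b (x :: y :: l)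

lemma Alt.tail {b : Bool} {x : α} {l : List α} (h : Alt b (x :: l)) : Alt (!b) l := by
  cases h with
  | single => exact Alt.nil _
  | cons _ h2 => exact h2

lemma alt_cons_cons {b : Bool} {x y : α} {l : List α} :
    Alt b (x :: y :: l) ↔ r b x y ∧ Alt (!b) (y :: l) := by
  constructor
  · intro h; cases h with | cons h1 h2 => exact ⟨h1, h2⟩
  · rintro ⟨h1, h2⟩; exact Alt.cons h1 h2

lemma alt_append_left : ∀ (u v : List α) (b : Bool), Alt b (u ++ v) → Alt b u
  | [], _, b, _ => Alt.nil b
  | [a], _, b, _ => Alt.single b a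
  | a :: a' :: u, v, b, h => by
      rw [List.cons_append, List.cons_append] at h
      rcases alt_cons_cons.mp h with ⟨h1, h2⟩
      exact Alt.cons h1 (alt_append_left (a' :: u) v _ h2)

/-- The key repair lemma: deleting one element from an alternating list, one can
delete at most one more element to restore alternation (with controlled head). -/
lemma repair : ∀ (u : List α) (x : α) (w : List α) (b : Bool),
    (u ++ x :: w).Nodup → Alt b (u ++ x :: w) →
    ∃ s : List α, s.Sublist (u ++ w) ∧ Alt b s ∧ u.length + w.length ≤ s.length + 1 ∧
      (∀ a₀ t₀, u = a₀ :: t₀ → ∃ h t, s = h :: t ∧ (h = a₀ ∨ r (!b) a₀ h))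
  | [], x, w, b, hnd, h => by
      match w, h with
      | [], _ => exact ⟨[], List.nil_sublist _, Alt.nil b, by simp, by simp⟩
      | y :: w', h =>
          refine ⟨w', ?_, ?_, by simp, by simp⟩
          · exact (List.sublist_cons_self y w').trans (by simp)
          · have h1 : Alt (!b) (y :: w') := h.tail
            have h2 : Alt (!(!b)) w' := h1.tail
            simpa using h2
  | [a], x, w, b, hnd, h => by
      rw [List.singleton_append] at h
      rcases alt_cons_cons.mp h with ⟨hax, h2⟩
      match w, h2 with
      | [], _ =>
          exact ⟨[a], by simp, Alt.single b a, by simp, by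
            rintro a₀ t₀ ⟨rfl, rfl⟩; exact ⟨a, [], rfl, Or.inl rfl⟩⟩
      | y :: w', h2 =>
          rcases alt_cons_cons.mp h2 with ⟨hxy, h3⟩
          rw [Bool.not_not] at h3
          by_cases hc : r b a y
          · match w', h3 with
            | [], _ =>
                refine ⟨[a, y], by simp, Alt.cons hc (Alt.single _ y), by simp, ?_⟩
                rintro a₀ t₀ ⟨rfl, rfl⟩; exact ⟨a, [y], rfl, Or.inl rfl⟩
            | z :: w'', h3 =>
                rcases alt_cons_cons.mp h3 with ⟨hyz, h4⟩
                refine ⟨a :: z :: w'', ?_, Alt.cons (r_trans hc hyz) h4,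
                  by simp only [List.length_cons, List.length_nil]; omega, ?_⟩
                · refine List.cons_sublist_cons.mpr ?_
                  exact (List.sublist_cons_self y (z :: w'')).trans (List.Sublist.refl _)
                · rintro a₀ t₀ ⟨rfl, rfl⟩; exact ⟨a, z :: w'', rfl, Or.inl rfl⟩
          · have hay : a ≠ y := by
              simp only [List.singleton_append, List.nodup_cons, List.mem_cons] at hnd
              intro hh; exact hnd.1 (Or.inr (Or.inl hh))
            have hr : r (!b) a y := r_total hay hc
            refine ⟨y :: w', ?_, h3, by simp only [List.length_cons, List.length_nil]; omega, ?_⟩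
            · exact (List.Sublist.refl _).cons a
            · rintro a₀ t₀ ⟨rfl, rfl⟩; exact ⟨y, w', rfl, Or.inr hr⟩
  | a :: a' :: u', x, w, b, hnd, h => by
      rw [List.cons_append] at h
      rcases alt_cons_cons.mp h with ⟨h1, h2⟩
      have hh1 : r b a a' := h1
      have hnd' : ((a' :: u') ++ x :: w).Nodup := by
        rw [List.cons_append, List.nodup_cons] at hnd; exact hnd.2
      rcases repair (a' :: u') x w (!b) hnd' h2 with
        ⟨s, hs1, hs2, hs3, hs4⟩
      rcases hs4 a' u' rfl with ⟨hh, t, rfl, hht⟩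
      have hrel : r b a hh := by
        rcases hht with rfl | hr
        · exact hh1
        · rw [Bool.not_not] at hr; exact r_trans hh1 hr
      refine ⟨a :: hh :: t, ?_, Alt.cons hrel hs2, ?_, ?_⟩
      · rw [List.cons_append]; exact List.cons_sublist_cons.mpr hs1
      · simp only [List.length_cons] at hs3 ⊢; omega
      · rintro a₀ t₀ ⟨rfl, rfl⟩; exact ⟨a, hh :: t, rfl, Or.inl rfl⟩

/-- From an alternating list one can delete any given value at the cost of
at most one more deletion. -/
lemma remove_one {v : List α} (c : α) (hnd : v.Nodup) (h : Alt true v) :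
    ∃ s : List α, s.Sublist v ∧ Alt true s ∧ v.length ≤ s.length + 2 ∧ c ∉ s := by
  by_cases hc : c ∈ v
  · rcases List.append_of_mem hc with ⟨v₁, v₂, rfl⟩
    rcases repair v₁ c v₂ true hnd h with ⟨s, hs1, hs2, hs3, -⟩
    have hsub : s.Sublist (v₁ ++ c :: v₂) :=
      hs1.trans ((List.sublist_cons_self c v₂).append_left v₁)
    refine ⟨s, hsub, hs2, by simp only [List.length_append, List.length_cons]; omega, ?_⟩
    intro hcs
    have : c ∈ v₁ ++ v₂ := hs1.subset hcs
    rw [List.nodup_append] at hnd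
    rcases List.mem_append.mp this with h' | h'
    · exact hnd.2.2 c h' c List.mem_cons_self rfl
    · exact (List.nodup_cons.mp hnd.2.1).1 h'
  · exact ⟨v, List.Sublist.refl v, h, by omega, hc⟩

/-- index-based characterization of `Alt`. -/
lemma alt_iff_idx : ∀ (v : List α) (b : Bool),
    Alt b v ↔ ∀ m : ℕ, ∀ h : m + 1 < v.length,
      r (if m % 2 = 0 then b else !b) (v.get ⟨m, Nat.lt_of_succ_lt h⟩) (v.get ⟨m + 1, h⟩)
  | [], b => by
      constructor
      · intro _ m h; simp at h
      · intro _; exact Alt.nil b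
  | [x], b => by
      constructor
      · intro _ m h; simp at h
      · intro _; exact Alt.single b x
  | x :: y :: v', b => by
      rw [alt_cons_cons, alt_iff_idx (y :: v') (!b)]
      constructor
      · rintro ⟨h1, h2⟩ m h
        match m with
        | 0 => simpa using h1
        | Nat.succ k =>
            have hk : k + 1 < (y :: v').length := by
              simp only [List.length_cons] at h ⊢; omega
            have hrec := h2 k hk
            by_cases hke : k % 2 = 0
            · have h1 : ¬ ((k + 1) % 2 = 0) := by omega
              rw [if_pos hke] at hrec
              rw [if_neg h1]
              exact hrec
            · have h1 : (k + 1) % 2 = 0 := by omega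
              rw [if_neg hke, Bool.not_not] at hrec
              rw [if_pos h1]
              exact hrec
      · intro hall
        constructor
        · have hrec := hall 0 (by simp)
          rw [if_pos (by norm_num : (0 : ℕ) % 2 = 0)] at hrec
          exact hrec
        · intro k hk
          have hk' : k + 1 + 1 < (x :: y :: v').length := by
            simp only [List.length_cons] at hk ⊢; omega
          have hrec := hall (k + 1) hk'
          by_cases hke : k % 2 = 0
          · have h1 : ¬ ((k + 1) % 2 = 0) := by omega
            rw [if_neg h1] at hrec
            rw [if_pos hke]
            exact hrec
          · have h1 : (k + 1) % 2 = 0 := by omega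
            rw [if_pos h1] at hrec
            rw [if_neg hke, Bool.not_not]
            exact hrec

end LasAux

open LasAux

lemma isAltSubseq_iff {n : ℕ} (σ : Equiv.Perm (Fin n)) (l : List (Fin n)) :
    IsAltSubseq σ l ↔ l.Chain' (· < ·) ∧ Alt true (l.map σ) := by
  rw [IsAltSubseq, alt_iff_idx]
  refine and_congr_right fun _ => ?_
  constructor
  · intro h m hm
    have hm' : m + 1 < l.length := by simpa using hm
    have := h m hm'
    by_cases hme : m % 2 = 0
    · simp only [hme, if_true] at this ⊢
      simpa [List.getElem_map] using this
    · simp only [hme, if_false] at this ⊢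
      simpa [List.getElem_map] using this
  · intro h m hm
    have hm' : m + 1 < (l.map σ).length := by simpa using hm
    have := h m hm'
    by_cases hme : m % 2 = 0
    · simp only [hme, if_true] at this ⊢
      simpa [List.getElem_map] using this
    · simp only [hme, if_false] at this ⊢
      simpa [List.getElem_map] using this

lemma isAltSubseq_nodup {n : ℕ} {σ : Equiv.Perm (Fin n)} {l : List (Fin n)}
    (h : IsAltSubseq σ l) : l.Nodup := by
  have := (List.isChain_iff_pairwise).mp h.1
  exact this.imp ne_of_lt

lemma las_bddAbove {n : ℕ} (σ : Equiv.Perm (Fin n)) :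
    BddAbove {k | ∃ l : List (Fin n), IsAltSubseq σ l ∧ l.length = k} := by
  refine ⟨n, ?_⟩
  rintro k ⟨l, hl, rfl⟩
  have := (isAltSubseq_nodup hl).length_le_card
  simpa using this

lemma las_nonempty {n : ℕ} (σ : Equiv.Perm (Fin n)) :
    Set.Nonempty {k | ∃ l : List (Fin n), IsAltSubseq σ l ∧ l.length = k} :=
  ⟨0, [], ⟨List.isChain_nil, fun m h => by simp at h⟩, rfl⟩

lemma le_LAS {n : ℕ} {σ : Equiv.Perm (Fin n)} {l : List (Fin n)} (h : IsAltSubseq σ l) :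
    l.length ≤ LAS σ :=
  le_csSup (las_bddAbove σ) ⟨l, h, rfl⟩

lemma LAS_spec {n : ℕ} (σ : Equiv.Perm (Fin n)) :
    ∃ l : List (Fin n), IsAltSubseq σ l ∧ l.length = LAS σ :=
  Nat.sSup_mem (las_nonempty σ) (las_bddAbove σ)

lemma las_one_side {n : ℕ} (σ : Equiv.Perm (Fin n)) (i j : Fin n) :
    LAS (σ * Equiv.swap i j) ≤ LAS σ + 4 := by
  set τ := σ * Equiv.swap i j with hτ
  rcases LAS_spec τ with ⟨l, hl, hlen⟩
  rcases (isAltSubseq_iff τ l).mp hl with ⟨hchain, halt⟩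
  have hnd : (l.map τ).Nodup := (isAltSubseq_nodup hl).map τ.injective
  rcases remove_one (τ i) hnd halt with ⟨s₁, hs₁sub, hs₁alt, hs₁len, hs₁i⟩
  rcases remove_one (τ j) (hnd.sublist hs₁sub) hs₁alt with ⟨s₂, hs₂sub, hs₂alt, hs₂len, hs₂j⟩
  have hs₂i : τ i ∉ s₂ := fun hh => hs₁i (hs₂sub.subset hh)
  have hsub : s₂.Sublist (l.map τ) := hs₂sub.trans hs₁sub
  rcases List.sublist_map_iff.mp hsub with ⟨m, hmsub, rfl⟩
  have hmi : i ∉ m := fun hh => hs₂i (List.mem_map_of_mem (f := τ) hh)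
  have hmj : j ∉ m := fun hh => hs₂j (List.mem_map_of_mem (f := τ) hh)
  have hmap : m.map τ = m.map σ := by
    refine List.map_congr_left fun x hx => ?_
    rw [hτ]
    simp only [Equiv.Perm.mul_apply]
    rw [Equiv.swap_apply_of_ne_of_ne (fun h => hmi (by rw [← h]; exact hx))
      (fun h => hmj (by rw [← h]; exact hx))]
  have hm : IsAltSubseq σ m := by
    rw [isAltSubseq_iff]
    exact ⟨hchain.sublist hmsub, by rw [← hmap]; exact hs₂alt⟩
  have h1 : m.length ≤ LAS σ := le_LAS hm
  have h2 : l.length ≤ m.length + 4 := by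
    have e1 : (l.map τ).length = l.length := by simp
    have e2 : (m.map τ).length = m.length := by simp
    omega
  omega

theorem las_swap_diff_le {n : ℕ} (σ : Equiv.Perm (Fin n)) (i j : Fin n) (hij : i ≠ j) :
    |(LAS σ : ℤ) - (LAS (σ * Equiv.swap i j) : ℤ)| ≤ 12 := by
  have h1 : LAS (σ * Equiv.swap i j) ≤ LAS σ + 4 := las_one_side σ i j
  have h2 : LAS σ ≤ LAS (σ * Equiv.swap i j) + 4 := by
    have := las_one_side (σ * Equiv.swap i j) i j
    rwa [Equiv.mul_swap_mul_self] at this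
  rw [abs_le]
  constructor <;> push_cast <;> omega
end
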